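/- Let A and B be self-adjoint operators on finite-dimensional real inner product spaces V and W respectively, both positive semidefinite. Then the operator A ⊗ id + id ⊗ B on V ⊗ W is positive semidefinite, and its kernel equals ker A ⊗ ker B. -/

import Mathlib

/-!
Diagonalizing `A` in an orthonormal eigenbasis and tensoring with any orthonormal basis of `W`
diagonalizes `A ⊗ id` with the (nonnegative) eigenvalues of `A`, so `A ⊗ id` is positive, and
likewise `id ⊗ B`. For positive operators `S`, `T` one has `re ⟪(S + T) x, x⟫ = 0` only if
`S x = T x = 0`, hence `ker L = ker (A ⊗ id) ⊓ ker (id ⊗ B)`. Since tensoring over a field is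
exact, this intersection is `ker A ⊗ ker B`.
-/

open TensorProduct LinearMap RCLike
open scoped InnerProductSpace

theorem LinearMap.ker_rTensor_inf_ker_lTensor {K V W V' W' : Type*} [Field K]
    [AddCommGroup V] [Module K V] [AddCommGroup W] [Module K W]
    [AddCommGroup V'] [Module K V'] [AddCommGroup W'] [Module K W']
    (f : V →ₗ[K] V') (g : W →ₗ[K] W') :
    ker (f.rTensor W) ⊓ ker (g.lTensor V) = range (map (ker f).subtype (ker g).subtype) := by
  refine le_antisymm ?_ (le_inf ?_ ?_)
  · rintro x ⟨hf, hg⟩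
    rw [exact_iff.mp (Module.Flat.rTensor_exact W (exact_subtype_ker_map f))] at hf
    obtain ⟨y, rfl⟩ := hf
    have hy : y ∈ ker (g.lTensor (ker f)) := by
      refine Module.Flat.rTensor_preserves_injective_linearMap _ (ker f).injective_subtype ?_
      rwa [map_zero, ← comp_apply, rTensor_comp_lTensor, ← lTensor_comp_rTensor]
    rw [exact_iff.mp (Module.Flat.lTensor_exact (ker f) (exact_subtype_ker_map g))] at hy
    obtain ⟨z, rfl⟩ := hy
    exact ⟨z, by rw [← rTensor_comp_lTensor, comp_apply]⟩
  · rw [range_le_ker_iff, rTensor_comp_map, comp_ker_subtype, map_zero_left]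
  · rw [range_le_ker_iff, lTensor_comp_map, comp_ker_subtype, map_zero_right]

theorem LinearMap.BilinForm.tmul_innerₗ (E F : Type*)
    [NormedAddCommGroup E] [InnerProductSpace ℝ E] [NormedAddCommGroup F] [InnerProductSpace ℝ F] :
    BilinForm.tmul (innerₗ E) (innerₗ F) = innerₗ (E ⊗[ℝ] F) := by
  ext v w v' w'
  simp [mul_comm]

section Positive

variable {𝕜 E F : Type*} [RCLike 𝕜] [NormedAddCommGroup E] [InnerProductSpace 𝕜 E]
  [NormedAddCommGroup F] [InnerProductSpace 𝕜 F]

theorem LinearMap.inner_map_eq_sum_of_orthonormalBasis {ι : Type*} [Fintype ι] {T : E →ₗ[𝕜] E}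
    (e : OrthonormalBasis ι 𝕜 E) (d : ι → ℝ) (hT : ∀ i, T (e i) = (d i : 𝕜) • e i) (x y : E) :
    ⟪T x, y⟫_𝕜 = ∑ i, (d i : 𝕜) * (⟪x, e i⟫_𝕜 * ⟪e i, y⟫_𝕜) := by
  conv_lhs => rw [← e.sum_repr' x]
  simp only [map_sum, map_smul, hT, sum_inner, inner_smul_left, conj_ofReal, inner_conj_symm]
  exact Finset.sum_congr rfl fun i _ => by ring

theorem LinearMap.isPositive_of_orthonormalBasis {ι : Type*} [Fintype ι] {T : E →ₗ[𝕜] E}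
    (e : OrthonormalBasis ι 𝕜 E) (d : ι → ℝ) (hd : 0 ≤ d)
    (hT : ∀ i, T (e i) = (d i : 𝕜) • e i) : T.IsPositive := by
  have hinner := inner_map_eq_sum_of_orthonormalBasis e d hT
  refine ⟨fun x y => ?_, fun x => ?_⟩
  · rw [hinner, ← inner_conj_symm, hinner, map_sum]
    refine Finset.sum_congr rfl fun i _ => ?_
    simp only [map_mul, conj_ofReal, inner_conj_symm]
    ring
  · rw [hinner, map_sum]
    refine Finset.sum_nonneg fun i _ => ?_
    rw [← inner_conj_symm, RCLike.conj_mul, ← ofReal_pow, ← ofReal_mul, ofReal_re]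
    exact mul_nonneg (hd i) (sq_nonneg _)

theorem LinearMap.IsPositive.rTensor [FiniteDimensional 𝕜 E] [FiniteDimensional 𝕜 F]
    {T : E →ₗ[𝕜] E} (hT : T.IsPositive) : (T.rTensor F).IsPositive := by
  refine isPositive_of_orthonormalBasis
    ((hT.isSymmetric.eigenvectorBasis rfl).tensorProduct (stdOrthonormalBasis 𝕜 F))
    (fun p => hT.isSymmetric.eigenvalues rfl p.1) (fun p => hT.nonneg_eigenvalues rfl p.1) ?_
  rintro ⟨i, j⟩
  rw [OrthonormalBasis.tensorProduct_apply, rTensor_tmul, hT.isSymmetric.apply_eigenvectorBasis,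
    smul_tmul']

theorem LinearMap.IsPositive.lTensor [FiniteDimensional 𝕜 E] [FiniteDimensional 𝕜 F]
    {T : F →ₗ[𝕜] F} (hT : T.IsPositive) : (T.lTensor E).IsPositive := by
  refine isPositive_of_orthonormalBasis
    ((stdOrthonormalBasis 𝕜 E).tensorProduct (hT.isSymmetric.eigenvectorBasis rfl))
    (fun p => hT.isSymmetric.eigenvalues rfl p.2) (fun p => hT.nonneg_eigenvalues rfl p.2) ?_
  rintro ⟨i, j⟩
  rw [OrthonormalBasis.tensorProduct_apply, lTensor_tmul, hT.isSymmetric.apply_eigenvectorBasis,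
    tmul_smul]

theorem LinearMap.IsPositive.re_inner_map_self_eq_zero_iff {T : E →ₗ[𝕜] E} (hT : T.IsPositive)
    {x : E} : re ⟪T x, x⟫_𝕜 = 0 ↔ T x = 0 := by
  refine ⟨fun hx => ?_, fun hx => by simp [hx]⟩
  -- A nonnegative quadratic in `t` with no constant term has no linear term either.
  have hquad : ∀ t : ℝ, 0 ≤ re ⟪T (T x), T x⟫_𝕜 * (t * t) + 2 * ‖T x‖ ^ 2 * t + 0 := by
    intro t
    have := hT.re_inner_nonneg_left (x + (t : 𝕜) • T x)
    simp only [map_add, map_smul, inner_add_left, inner_add_right, inner_smul_left,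
      inner_smul_right, conj_ofReal, re_ofReal_mul, hx] at this
    rw [hT.isSymmetric (T x) x, inner_self_eq_norm_sq] at this
    linarith
  have hdisc := discrim_le_zero hquad
  rw [discrim, mul_zero, sub_zero] at hdisc
  simpa using le_antisymm hdisc (sq_nonneg _)

theorem LinearMap.IsPositive.ker_add {S T : E →ₗ[𝕜] E} (hS : S.IsPositive) (hT : T.IsPositive) :
    ker (S + T) = ker S ⊓ ker T := by
  refine le_antisymm (fun x hx => ?_) (fun x ⟨hSx, hTx⟩ => by simp_all)
  have hsum : re ⟪S x, x⟫_𝕜 + re ⟪T x, x⟫_𝕜 = 0 := by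
    rw [← map_add, ← inner_add_left, ← add_apply, mem_ker.mp hx, inner_zero_left, map_zero]
  have hS0 := hS.re_inner_nonneg_left x
  have hT0 := hT.re_inner_nonneg_left x
  exact ⟨hS.re_inner_map_self_eq_zero_iff.mp (by linarith),
    hT.re_inner_map_self_eq_zero_iff.mp (by linarith)⟩

end Positive

open TensorProduct in
theorem stmt_14 (V W : Type*)
    [NormedAddCommGroup V] [InnerProductSpace ℝ V] [FiniteDimensional ℝ V]
    [NormedAddCommGroup W] [InnerProductSpace ℝ W] [FiniteDimensional ℝ W]
    (A : V →ₗ[ℝ] V) (B : W →ₗ[ℝ] W)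
    (hAsym : LinearMap.IsSymmetric A) (hBsym : LinearMap.IsSymmetric B)
    (hApos : ∀ v : V, 0 ≤ inner (A v) v (𝕜 := ℝ))
    (hBpos : ∀ w : W, 0 ≤ inner (B w) w (𝕜 := ℝ))
    (Φ : LinearMap.BilinForm ℝ (V ⊗[ℝ] W))
    (hΦ : Φ = LinearMap.BilinForm.tmul
      (innerₗ V) (innerₗ W))
    (L : V ⊗[ℝ] W →ₗ[ℝ] V ⊗[ℝ] W)
    (hL : L = TensorProduct.map A LinearMap.id + TensorProduct.map LinearMap.id B) :
    (∀ x : V ⊗[ℝ] W, 0 ≤ Φ (L x) x) ∧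
    LinearMap.ker L = LinearMap.range
      (TensorProduct.map (LinearMap.ker A).subtype (LinearMap.ker B).subtype) := by
  have hA : (A.rTensor W).IsPositive := ((isPositive_iff A).mpr ⟨hAsym, hApos⟩).rTensor
  have hB : (B.lTensor V).IsPositive := ((isPositive_iff B).mpr ⟨hBsym, hBpos⟩).lTensor
  have hL' : L = A.rTensor W + B.lTensor V := hL
  subst hΦ hL'
  refine ⟨fun x => ?_, ?_⟩
  · rw [BilinForm.tmul_innerₗ]
    exact (hA.add hB).inner_nonneg_left x
  · rw [hA.ker_add hB, ker_rTensor_inf_ker_lTensor]
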